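/- Let Σ be symmetric positive definite with modified Cholesky decomposition Σ⁻¹ = (I − A)ᵀ D⁻¹ (I − A). For i < j, if A_{ji} = 0 then the (j,i) entry of Σ⁻¹ satisfies (Σ⁻¹)_{ji} = Σ_{k > j} A_{kj} A_{ki} / d_k; in particular, if row j of A is supported only on a set C_j ⊆ {1,…,j−1} and no later row k > j has both A_{kj} ≠ 0 and A_{ki} ≠ 0, then (Σ⁻¹)_{ji} = 0. -/
import Mathlib


open Matrix Finset

/-- Sparsity of the modified Cholesky factor translates into sparsity of the
precision matrix: for `i < j` with `A j i = 0`,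
`(Σ⁻¹)_{ji} = Σ_{k > j} A_{kj} A_{ki} / d_k`; in particular, if no row `k > j`
has both `A k j ≠ 0` and `A k i ≠ 0`, then `(Σ⁻¹)_{ji} = 0`. -/
theorem precision_sparsity {N : ℕ} (S A : Matrix (Fin N) (Fin N) ℝ)
    (d : Fin N → ℝ) (hS : S.PosDef)
    (hA : ∀ i j : Fin N, i ≤ j → A i j = 0)
    (hd : ∀ k, 0 < d k)
    (hdecomp : S⁻¹ = (1 - A)ᵀ * (Matrix.diagonal d)⁻¹ * (1 - A))
    (i j : Fin N) (hij : i < j) (hAji : A j i = 0) :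
    S⁻¹ j i = ∑ k ∈ Finset.univ.filter (fun k => j < k), A k j * A k i / d k ∧
    ((∀ k : Fin N, j < k → ¬(A k j ≠ 0 ∧ A k i ≠ 0)) → S⁻¹ j i = 0) := by
  have hdiag : (Matrix.diagonal d)⁻¹ = Matrix.diagonal (fun k => (d k)⁻¹) := by
    refine Matrix.inv_eq_right_inv ?_
    rw [Matrix.diagonal_mul_diagonal]
    convert Matrix.diagonal_one with k
    exact mul_inv_cancel₀ (hd k).ne'
  have hmain : S⁻¹ j i
      = ∑ k ∈ Finset.univ.filter (fun k => j < k), A k j * A k i / d k := by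
    rw [hdecomp, hdiag, Matrix.mul_assoc, Matrix.mul_apply]
    have hterm : ∀ k : Fin N,
        (1 - A)ᵀ j k * (Matrix.diagonal (fun k => (d k)⁻¹) * (1 - A)) k i
        = if j < k then A k j * A k i / d k else 0 := by
      intro k
      rw [Matrix.diagonal_mul]
      simp only [Matrix.transpose_apply, Matrix.sub_apply]
      rcases lt_trichotomy k j with h | h | h
      · have h1 : A k j = 0 := hA k j h.le
        have h2 : (1 : Matrix (Fin N) (Fin N) ℝ) k j = 0 := Matrix.one_apply_ne h.ne
        simp [h1, h2, not_lt.mpr h.le]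
      · subst h
        have h1 : A k k = 0 := hA k k le_rfl
        have h2 : (1 : Matrix (Fin N) (Fin N) ℝ) k i = 0 :=
          Matrix.one_apply_ne (ne_of_gt hij)
        simp [h1, h2, hAji]
      · have h2 : (1 : Matrix (Fin N) (Fin N) ℝ) k j = 0 :=
          Matrix.one_apply_ne (ne_of_gt h)
        have h3 : (1 : Matrix (Fin N) (Fin N) ℝ) k i = 0 :=
          Matrix.one_apply_ne (ne_of_gt (hij.trans h))
        simp only [h2, h3, if_pos h, zero_sub]
        field_simp
    rw [Finset.sum_congr rfl (fun k _ => hterm k), Finset.sum_filter]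
  refine ⟨hmain, fun h => ?_⟩
  rw [hmain]
  refine Finset.sum_eq_zero fun k hk => ?_
  simp only [Finset.mem_filter, Finset.mem_univ, true_and] at hk
  rcases not_and_or.mp (h k hk) with h' | h' <;>
    simp [not_not.mp h']
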